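/- arXiv:math/0612320 — 2 statements merged into one kernel-verified Lean document; each statement's English description precedes it below -/
import Mathlib

section
/- Let Q be a nondegenerate quadratic form on V and let X* = (X^{≥a})_{a∈ℤ} be a Q-filtration of V. Then for every a ≤ 0 one has (X^{≥a})^⊥ = X^{≥1−a} ⊕ R (direct sum) and X^{≥1−a} = (X^{≥a})^⊥ ∩ Q^{−1}(0). -/
/-!
Modulo the radical `R`, `⟨,⟩` is nondegenerate, so `W^⊥⊥ = W ⊕ R` for every subspace `W`;
applied to `W = X^{≥1-a}`, whose orthogonal is `X^{≥a}`, this gives the first claim. Since `Q`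
vanishes on `X^{≥1-a}` and `R ⊥ V`, an element `w + r` with `w ∈ X^{≥1-a}`, `r ∈ R` has
`Q(w + r) = Q(r)`, and nondegeneracy of `Q` turns `Q(r) = 0` into `r = 0`.
-/

open QuadraticMap

variable {k V : Type*}

/-- The perpendicular of a set `S ⊆ V` with respect to the bilinear form
`⟨x,y⟩ = Q(x+y) - Q x - Q y` associated to a quadratic form `Q`. -/
def perp [Field k] [AddCommGroup V] [Module k V] (Q : QuadraticForm k V) (S : Set V) :
    Submodule k V where
  carrier := {x | ∀ y ∈ S, polar Q x y = 0}
  add_mem' := by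
    intro a b ha hb y hy
    rw [polar_add_left, ha y hy, hb y hy, add_zero]
  zero_mem' := by
    intro y hy
    simp [polar]
  smul_mem' := by
    intro c a ha y hy
    rw [polar_smul_left, ha y hy, smul_zero]

/-- The radical `R = {x ∈ V : ⟨x, V⟩ = 0}` of the bilinear form associated to `Q`. -/
def rad [Field k] [AddCommGroup V] [Module k V] (Q : QuadraticForm k V) : Submodule k V :=
  perp Q Set.univ

/-- `Q` is nondegenerate: its restriction to the radical of the associated bilinear
form is injective. -/
def QNondeg [Field k] [AddCommGroup V] [Module k V] (Q : QuadraticForm k V) : Prop :=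
  Set.InjOn Q (rad Q : Set V)

/-- `𝓜̃_Q`: the set of nilpotent endomorphisms `N` with `Q(Nx) = -⟨x, Nx⟩` for all `x`
(equivalently, `1 + N` is a unipotent element of the orthogonal group `O_Q`). -/
def Mtilde [Field k] [AddCommGroup V] [Module k V] (Q : QuadraticForm k V) :
    Set (Module.End k V) :=
  {N | IsNilpotent N ∧ ∀ x, Q (N x) = - polar Q x (N x)}

/-- A `Q`-filtration of `V`: a decreasing family of subspaces, equal to `V` for small
indices and to `0` for large indices, such that for every `a ≥ 1` the form `Q` vanishes
on `X^{≥a}` and `X^{≥1-a} = (X^{≥a})^⊥`. -/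
def IsQFiltration [Field k] [AddCommGroup V] [Module k V] (Q : QuadraticForm k V)
    (X : ℤ → Submodule k V) : Prop :=
  (∀ a : ℤ, X (a + 1) ≤ X a) ∧ (∃ a : ℤ, X a = ⊤) ∧ (∃ a : ℤ, X a = ⊥) ∧
    ∀ a : ℤ, 1 ≤ a → (∀ x ∈ X a, Q x = 0) ∧ X (1 - a) = perp Q (X a : Set V)

open LinearMap.BilinForm

theorem LinearMap.BilinForm.orthogonal_orthogonal_eq_sup_ker {K M : Type*} [Field K]
    [AddCommGroup M] [Module K M] [FiniteDimensional K M] {B : LinearMap.BilinForm K M}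
    (hB : B.IsRefl) (W : Submodule K M) :
    B.orthogonal (B.orthogonal W) = W ⊔ LinearMap.ker B := by
  have hker : ∀ U : Submodule K M, LinearMap.ker B ≤ B.orthogonal U := fun U =>
    orthogonal_top_eq_ker hB ▸ orthogonal_le le_top
  refine (Submodule.eq_of_le_of_finrank_le (sup_le (le_orthogonal_orthogonal hB) (hker _)) ?_).symm
  have hW := finrank_add_finrank_orthogonal' (B := B) W
  have hWperp := finrank_add_finrank_orthogonal' (B := B) (B.orthogonal W)
  rw [inf_eq_right.mpr (hker W)] at hWperp
  have hsup := Submodule.finrank_sup_add_finrank_inf_eq W (LinearMap.ker B)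
  omega

section

variable [Field k] [AddCommGroup V] [Module k V] {Q : QuadraticForm k V}

theorem isRefl_polarBilin : Q.polarBilin.IsRefl := fun x y h => by
  rwa [polarBilin_apply_apply, polar_comm, ← polarBilin_apply_apply]

theorem perp_eq_orthogonal_polarBilin (W : Submodule k V) :
    perp Q (W : Set V) = orthogonal Q.polarBilin W := by
  ext x
  exact forall₂_congr fun y _ => by rw [polarBilin_apply_apply, polar_comm]

theorem rad_eq_ker_polarBilin : rad Q = LinearMap.ker Q.polarBilin := by
  rw [rad, ← Submodule.top_coe (R := k), perp_eq_orthogonal_polarBilin,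
    orthogonal_top_eq_ker isRefl_polarBilin]

theorem perp_perp [FiniteDimensional k V] (W : Submodule k V) :
    perp Q (perp Q (W : Set V) : Set V) = W ⊔ rad Q := by
  rw [perp_eq_orthogonal_polarBilin, perp_eq_orthogonal_polarBilin, rad_eq_ker_polarBilin,
    orthogonal_orthogonal_eq_sup_ker isRefl_polarBilin]

theorem map_add_of_mem_rad {x r : V} (hr : r ∈ rad Q) : Q (x + r) = Q x + Q r := by
  have h : polar Q x r = 0 := by rw [polar_comm]; exact hr x (Set.mem_univ x)
  rw [polar, sub_sub, sub_eq_zero] at h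
  exact h

theorem QNondeg.eq_zero_of_mem_rad (hQ : QNondeg Q) {r : V} (hr : r ∈ rad Q) (h : Q r = 0) :
    r = 0 :=
  hQ hr (rad Q).zero_mem (by rw [h, map_zero])

theorem QNondeg.disjoint_rad (hQ : QNondeg Q) {W : Submodule k V} (hW : ∀ x ∈ W, Q x = 0) :
    Disjoint W (rad Q) :=
  Submodule.disjoint_def.mpr fun x hxW hxR => hQ.eq_zero_of_mem_rad hxR (hW x hxW)

theorem QNondeg.setOf_mem_sup_rad_map_eq_zero (hQ : QNondeg Q) {W : Submodule k V}
    (hW : ∀ x ∈ W, Q x = 0) : {x : V | x ∈ W ⊔ rad Q ∧ Q x = 0} = W := by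
  ext x
  refine ⟨fun ⟨hx, hQx⟩ => ?_, fun hx => ⟨Submodule.mem_sup_left hx, hW x hx⟩⟩
  obtain ⟨w, hw, r, hr, rfl⟩ := Submodule.mem_sup.mp hx
  rw [map_add_of_mem_rad hr, hW w hw, zero_add] at hQx
  rw [hQ.eq_zero_of_mem_rad hr hQx, add_zero]
  exact hw

end

/-- for a `Q`-filtration and `a ≤ 0`, `(X^{≥a})^⊥ = X^{≥1-a} ⊕ R` (a direct
sum) and `X^{≥1-a} = (X^{≥a})^⊥ ∩ Q⁻¹(0)`. -/
theorem stmt7 [Field k] [AddCommGroup V] [Module k V] [FiniteDimensional k V]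
    (Q : QuadraticForm k V) (hQ : QNondeg Q)
    (X : ℤ → Submodule k V) (hX : IsQFiltration Q X) :
    ∀ a : ℤ, a ≤ 0 →
      perp Q (X a : Set V) = X (1 - a) ⊔ rad Q ∧
      Disjoint (X (1 - a)) (rad Q) ∧
      (X (1 - a) : Set V) = {x : V | x ∈ perp Q (X a : Set V) ∧ Q x = 0} := by
  intro a ha
  obtain ⟨hiso, hperp⟩ := hX.2.2.2 (1 - a) (by omega)
  rw [sub_sub_cancel] at hperp
  have hsum : perp Q (X a : Set V) = X (1 - a) ⊔ rad Q := by rw [hperp, perp_perp]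
  refine ⟨hsum, hQ.disjoint_rad hiso, ?_⟩
  rw [hsum, hQ.setOf_mem_sup_rad_map_eq_zero hiso]
end

section
/- Let Q be a nondegenerate quadratic form on V, let N ∈ 𝓜̃_Q with N ≠ 0, let e := e_N, and let E be any subspace of V with V = E ⊕ ker N^{e−1}. Then: (1) the linear map E^{⊕e} → V, (v_0, v_1, …, v_{e−1}) ↦ v_0 + Nv_1 + ⋯ + N^{e−1}v_{e−1}, is injective; (2) the bilinear form ⟨,⟩ is nondegenerate on its image W := E + NE + ⋯ + N^{e−1}E; (3) V = W ⊕ W^⊥, R ⊆ W^⊥, W^⊥ is N-stable, and N^{e−1}(W^⊥) = 0. -/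
open QuadraticMap

variable {k V : Type*}

/-!
`N ∈ 𝓜̃_Q` says that `1 + N` is an isometry of `Q`, so `N` has the adjoint `-N(1 + N)⁻¹` for
`⟨,⟩` and `N^d V ⊥ ker N^d` for every `d`. A vector `Nw` in the radical has
`Q(Nw) = -⟨w, Nw⟩ = 0 = Q 0`, hence is `0` by nondegeneracy; so a vector of `N^{e-1} V` that is
orthogonal to `E` is orthogonal to `E + ker N^{e-1} = V` and vanishes. This, together with
`N^{e-1-n}(∑ N^i v_i) = N^{e-1} v_n` when `v_i = 0` for `i < n`, gives injectivity and
nondegeneracy on `W` by induction on `n`; `W^⊥` is `N`-stable because `W` is stable under the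
adjoint, and `N^{e-1} W^⊥ = 0` by the same radical argument.
-/

open Finset

theorem one_add_mul_geom_sum_neg {A : Type*} [Ring A] {x : A} {e : ℕ} (he : x ^ e = 0) :
    (1 + x) * ∑ i ∈ range e, (-x) ^ i = 1 := by
  have h := mul_neg_geom_sum (-x) e
  rwa [sub_neg_eq_add, neg_pow, he, mul_zero, sub_zero] at h

section
variable {R M : Type*} [Ring R] [AddCommGroup M] [Module R M]

theorem mapsTo_pow {N : Module.End R M} {S : Set M} (h : Set.MapsTo N S S) (n : ℕ) :
    Set.MapsTo (N ^ n) S S := by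
  rw [Module.End.coe_pow]
  exact h.iterate n

/-- For `N ∈ 𝓜̃_Q` with `N ^ e = 0`, `-negAdjoint N e` is the `⟨,⟩`-adjoint of `N`: it is
`(1 + N)⁻¹ N`, the inverse being the geometric series in `-N`, which stops at `e`. -/
def negAdjoint (N : Module.End R M) (e : ℕ) : Module.End R M :=
  (∑ i ∈ range e, (-N) ^ i) * N

theorem commute_geom_sum_neg (N : Module.End R M) (e : ℕ) :
    Commute (∑ i ∈ range e, (-N) ^ i) N :=
  Commute.sum_left _ _ _ fun i _ => ((Commute.refl N).neg_left).pow_left i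

theorem mapsTo_negAdjoint {N : Module.End R M} {e : ℕ} {W : Submodule R M}
    (hW : Set.MapsTo N W W) : Set.MapsTo (negAdjoint N e) W W := by
  have hneg : Set.MapsTo (-N) W W := fun x hx => by
    rw [LinearMap.neg_apply]
    exact W.neg_mem (hW hx)
  intro w hw
  rw [negAdjoint, Module.End.mul_apply, LinearMap.sum_apply]
  exact W.sum_mem fun i _ => mapsTo_pow hneg i (hW hw)

end

section
variable {R M P : Type*} [CommRing R] [AddCommGroup M] [Module R M] [AddCommGroup P] [Module R P]
  {Q : QuadraticMap R M P} {N : Module.End R M} (hN : ∀ x, Q (N x) = -polar Q x (N x))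
include hN

theorem apply_add_apply_self (x : M) : Q (x + N x) = Q x := by
  have h := hN x
  rw [polar] at h
  linear_combination (norm := module) h

theorem polar_add_apply_self (x y : M) : polar Q (x + N x) (y + N y) = polar Q x y := by
  rw [polar, polar, show x + N x + (y + N y) = x + y + N (x + y) by rw [map_add]; abel,
    apply_add_apply_self hN, apply_add_apply_self hN, apply_add_apply_self hN]

theorem polar_apply_add_apply_self (x y : M) :
    polar Q (N x) (y + N y) = -polar Q x (N y) := by
  have h := polar_add_apply_self hN x y
  rw [polar_add_left, polar_add_right Q x] at h
  linear_combination (norm := module) h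

variable {e : ℕ} (he : N ^ e = 0)
include he

theorem polar_apply_eq_neg_polar_negAdjoint (x y : M) :
    polar Q (N x) y = -polar Q x (negAdjoint N e y) := by
  have hy := LinearMap.congr_fun (one_add_mul_geom_sum_neg he) y
  rw [add_mul, one_mul, LinearMap.add_apply, Module.End.mul_apply, Module.End.one_apply] at hy
  conv_lhs => rw [← hy, polar_apply_add_apply_self hN]
  rw [negAdjoint, (commute_geom_sum_neg N e).eq, Module.End.mul_apply]

theorem polar_pow_apply_eq_polar_negAdjoint_pow (a : ℕ) (x y : M) :
    polar Q ((N ^ a) x) y = (-1 : R) ^ a • polar Q x ((negAdjoint N e ^ a) y) := by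
  induction a generalizing x with
  | zero => simp
  | succ a ih =>
    rw [pow_succ, Module.End.mul_apply, ih, polar_apply_eq_neg_polar_negAdjoint hN he,
      ← Module.End.mul_apply, ← pow_succ', pow_succ (-1 : R), mul_smul, neg_one_smul]

theorem polar_pow_apply_eq_zero_of_pow_apply_eq_zero {d : ℕ} {w : M} (hw : (N ^ d) w = 0)
    (y : M) : polar Q ((N ^ d) y) w = 0 := by
  rw [polar_pow_apply_eq_polar_negAdjoint_pow hN he, negAdjoint,
    (commute_geom_sum_neg N e).mul_pow, Module.End.mul_apply, hw, map_zero, polar_zero_right,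
    smul_zero]

end

section
variable [Field k] [AddCommGroup V] [Module k V] {Q : QuadraticForm k V} {N : Module.End k V}

theorem rad_le_perp (S : Set V) : rad Q ≤ perp Q S :=
  fun _ hx y _ => hx y (Set.mem_univ y)

theorem isCompl_perp [FiniteDimensional k V] {W : Submodule k V}
    (hW : ∀ x ∈ W, (∀ y ∈ W, polar Q x y = 0) → x = 0) : IsCompl W (perp Q W) := by
  have hperp : perp Q W = LinearMap.BilinForm.orthogonal (polarBilin Q) W := by
    ext x
    exact forall₂_congr fun y _ => by rw [polar_comm]; rfl
  rw [hperp, LinearMap.BilinForm.isCompl_orthogonal_iff_disjoint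
    fun x y h => by simpa [polar_comm] using h, Submodule.disjoint_def]
  exact fun x hx hxW => hW x hx fun y hy => by rw [polar_comm]; exact hxW y hy

theorem mapsTo_perp (hN : ∀ x, Q (N x) = -polar Q x (N x)) {e : ℕ} (he : N ^ e = 0)
    {W : Submodule k V} (hW : Set.MapsTo N W W) : Set.MapsTo N (perp Q W) (perp Q W) :=
  fun x hx w hw => by
    rw [polar_apply_eq_neg_polar_negAdjoint hN he, hx _ (mapsTo_negAdjoint hW hw), neg_zero]

theorem apply_eq_zero_of_apply_mem_rad (hQ : QNondeg Q) (hN : ∀ x, Q (N x) = -polar Q x (N x))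
    {w : V} (hw : N w ∈ rad Q) : N w = 0 := by
  refine hQ hw (rad Q).zero_mem ?_
  rw [map_zero, hN, polar_comm, hw w (Set.mem_univ w), neg_zero]

theorem pow_apply_eq_zero_of_polar_eq_zero (hQ : QNondeg Q)
    (hN : ∀ x, Q (N x) = -polar Q x (N x)) {e : ℕ} (he : N ^ e = 0) {d : ℕ} (hd : 0 < d)
    {E : Submodule k V} (hE : Codisjoint E (LinearMap.ker (N ^ d))) {y : V}
    (hy : ∀ u ∈ E, polar Q ((N ^ d) y) u = 0) : (N ^ d) y = 0 := by
  have hrad : (N ^ d) y ∈ rad Q := by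
    intro z _
    obtain ⟨u, hu, w, hw, rfl⟩ := Submodule.mem_sup.mp (hE.eq_top ▸ Submodule.mem_top : z ∈ E ⊔ _)
    rw [polar_add_right, hy u hu, polar_pow_apply_eq_zero_of_pow_apply_eq_zero hN he hw,
      add_zero]
  obtain ⟨d, rfl⟩ := Nat.exists_eq_add_of_lt hd
  rw [zero_add, pow_succ', Module.End.mul_apply] at hrad ⊢
  exact apply_eq_zero_of_apply_mem_rad hQ hN hrad

end

section
variable {R M : Type*} [Ring R] [AddCommGroup M] [Module R M] (N : Module.End R M)
  (E : Submodule R M) (e : ℕ)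

def powSum : (Fin e → E) →ₗ[R] M where
  toFun v := ∑ i : Fin e, (N ^ (i : ℕ)) (v i : M)
  map_add' v w := by simp only [Pi.add_apply, Submodule.coe_add, map_add, sum_add_distrib]
  map_smul' c v := by simp only [Pi.smul_apply, Submodule.coe_smul, map_smul, smul_sum,
    RingHom.id_apply]

theorem powSum_apply (v : Fin e → E) : powSum N E e v = ∑ i : Fin e, (N ^ (i : ℕ)) (v i : M) :=
  rfl

theorem range_powSum : LinearMap.range (powSum N E e) = ⨆ i : Fin e, E.map (N ^ (i : ℕ)) := by
  apply le_antisymm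
  · rintro _ ⟨v, rfl⟩
    rw [powSum_apply]
    exact Submodule.sum_mem _ fun (i : Fin e) _ =>
      Submodule.mem_iSup_of_mem i (Submodule.mem_map_of_mem (v i).2)
  · refine iSup_le fun i => ?_
    rintro _ ⟨u, hu, rfl⟩
    refine ⟨Pi.single i ⟨u, hu⟩, ?_⟩
    rw [powSum_apply, sum_eq_single i (fun j _ hj => by simp [Pi.single_eq_of_ne hj])
      (by simp)]
    simp

variable {N E e}

theorem pow_mem_range_powSum {u : M} (hu : u ∈ E) (i : Fin e) :
    (N ^ (i : ℕ)) u ∈ LinearMap.range (powSum N E e) := by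
  rw [range_powSum]
  exact Submodule.mem_iSup_of_mem i (Submodule.mem_map_of_mem hu)

theorem le_range_powSum (he : 0 < e) : E ≤ LinearMap.range (powSum N E e) := fun u hu => by
  simpa using pow_mem_range_powSum (N := N) hu ⟨0, he⟩

theorem mapsTo_range_powSum (he : N ^ e = 0) :
    Set.MapsTo N (LinearMap.range (powSum N E e)) (LinearMap.range (powSum N E e)) := by
  rintro _ ⟨v, rfl⟩
  rw [powSum_apply, map_sum]
  refine Submodule.sum_mem _ fun i _ => ?_
  rw [← Module.End.mul_apply, ← pow_succ']
  by_cases hi : (i : ℕ) + 1 < e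
  · exact pow_mem_range_powSum (v i).2 ⟨_, hi⟩
  · rw [pow_eq_zero_of_le (not_lt.mp hi) he, LinearMap.zero_apply]
    exact Submodule.zero_mem _

theorem pow_apply_powSum (he : N ^ e = 0) (v : Fin e → E) (n : Fin e) (hv : ∀ i < n, v i = 0) :
    (N ^ (e - 1 - n)) (powSum N E e v) = (N ^ (e - 1)) (v n : M) := by
  rw [powSum_apply, map_sum, sum_eq_single n]
  · rw [← Module.End.mul_apply, ← pow_add, Nat.sub_add_cancel (by omega)]
  · intro i _ hin
    rcases lt_or_gt_of_ne hin with hlt | hgt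
    · rw [hv i hlt, ZeroMemClass.coe_zero, map_zero, map_zero]
    · rw [← Module.End.mul_apply, ← pow_add, pow_eq_zero_of_le (by omega) he,
        LinearMap.zero_apply]
  · simp

theorem eq_zero_of_forall_pow_apply_powSum_eq_zero (he : N ^ e = 0)
    (hE : Disjoint E (LinearMap.ker (N ^ (e - 1)))) {v : Fin e → E}
    (h : ∀ n : Fin e, (∀ i < n, v i = 0) → (N ^ (e - 1 - n)) (powSum N E e v) = 0) : v = 0 := by
  funext n
  induction n using WellFoundedLT.induction with
  | ind n ih =>
    have hn : (N ^ (e - 1)) (v n : M) = 0 := by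
      rw [← pow_apply_powSum he v n ih]
      exact h n ih
    exact Subtype.ext (Submodule.disjoint_def.mp hE _ (v n).2 hn)

theorem injective_powSum (he : N ^ e = 0) (hE : Disjoint E (LinearMap.ker (N ^ (e - 1)))) :
    Function.Injective (powSum N E e) := by
  rw [← LinearMap.ker_eq_bot, Submodule.eq_bot_iff]
  rintro v hv
  exact eq_zero_of_forall_pow_apply_powSum_eq_zero he hE fun n _ => by
    rw [LinearMap.mem_ker.mp hv, map_zero]

end

theorem eq_zero_of_powSum_mem_perp [Field k] [AddCommGroup V] [Module k V]
    {Q : QuadraticForm k V} {N : Module.End k V} {E : Submodule k V} {e : ℕ} (hQ : QNondeg Q)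
    (hN : ∀ x, Q (N x) = -polar Q x (N x)) (he : N ^ e = 0) (he2 : 2 ≤ e)
    (hE : IsCompl E (LinearMap.ker (N ^ (e - 1))))
    {v : Fin e → E} (hv : powSum N E e v ∈ perp Q (LinearMap.range (powSum N E e))) :
    v = 0 := by
  have hperp := mapsTo_pow (mapsTo_perp hN he (mapsTo_range_powSum (E := E) he))
  refine eq_zero_of_forall_pow_apply_powSum_eq_zero he hE.disjoint fun n hn => ?_
  rw [pow_apply_powSum he v n hn]
  refine pow_apply_eq_zero_of_polar_eq_zero hQ hN he (by omega) hE.codisjoint fun u hu => ?_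
  rw [← pow_apply_powSum he v n hn]
  exact hperp _ hv u (le_range_powSum (by omega) hu)

theorem stmt12_general [Field k] [AddCommGroup V] [Module k V] [FiniteDimensional k V]
    (Q : QuadraticForm k V) (hQ : QNondeg Q) (N : Module.End k V) (hN : N ∈ Mtilde Q)
    (hN0 : N ≠ 0) (e : ℕ) (he : N ^ e = 0)
    (E : Submodule k V) (hE : IsCompl E (LinearMap.ker (N ^ (e - 1)))) :
    Function.Injective (fun v : Fin e → E => ∑ i : Fin e, (N ^ (i : ℕ)) (v i : V)) ∧
    (∀ x ∈ ⨆ i : Fin e, Submodule.map (N ^ (i : ℕ)) E,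
      (∀ y ∈ ⨆ i : Fin e, Submodule.map (N ^ (i : ℕ)) E,
          QuadraticMap.polar Q x y = 0) → x = 0) ∧
    IsCompl (⨆ i : Fin e, Submodule.map (N ^ (i : ℕ)) E)
      (perp Q ((⨆ i : Fin e, Submodule.map (N ^ (i : ℕ)) E : Submodule k V) : Set V)) ∧
    rad Q ≤ perp Q ((⨆ i : Fin e, Submodule.map (N ^ (i : ℕ)) E : Submodule k V) : Set V) ∧
    (∀ x ∈ perp Q ((⨆ i : Fin e, Submodule.map (N ^ (i : ℕ)) E : Submodule k V) : Set V),
      N x ∈ perp Q ((⨆ i : Fin e, Submodule.map (N ^ (i : ℕ)) E : Submodule k V) : Set V)) ∧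
    (∀ x ∈ perp Q ((⨆ i : Fin e, Submodule.map (N ^ (i : ℕ)) E : Submodule k V) : Set V),
      (N ^ (e - 1)) x = 0) := by
  obtain ⟨-, hN⟩ := hN
  have he2 : 2 ≤ e := by
    by_contra! h
    exact hN0 (pow_one N ▸ pow_eq_zero_of_le (by omega) he)
  have hperp := mapsTo_perp hN he (mapsTo_range_powSum (E := E) he)
  have hnd : ∀ x ∈ LinearMap.range (powSum N E e),
      (∀ y ∈ LinearMap.range (powSum N E e), polar Q x y = 0) → x = 0 := by
    rintro _ ⟨v, rfl⟩ hv
    rw [eq_zero_of_powSum_mem_perp hQ hN he he2 hE hv, map_zero]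
  rw [← range_powSum]
  refine ⟨injective_powSum he hE.disjoint, hnd, isCompl_perp hnd, rad_le_perp _, hperp,
    fun x hx => ?_⟩
  exact pow_apply_eq_zero_of_polar_eq_zero hQ hN he (by omega) hE.codisjoint fun u hu =>
    mapsTo_pow hperp (e - 1) hx u (le_range_powSum (by omega) hu)

/-- for `N ∈ 𝓜̃_Q`, `N ≠ 0`, `e = e_N` and `E` a complement of
`ker N^{e-1}` in `V`: (1) `(v_0,…,v_{e-1}) ↦ v_0 + Nv_1 + ⋯ + N^{e-1}v_{e-1}` is
injective on `E^{⊕e}`; (2) `⟨,⟩` is nondegenerate on `W = E + NE + ⋯ + N^{e-1}E`;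
(3) `V = W ⊕ W^⊥`, `R ⊆ W^⊥`, `W^⊥` is `N`-stable and `N^{e-1}(W^⊥) = 0`. -/
theorem stmt12 [Field k] [AddCommGroup V] [Module k V] [FiniteDimensional k V]
    (Q : QuadraticForm k V) (hQ : QNondeg Q) (N : Module.End k V) (hN : N ∈ Mtilde Q)
    (hN0 : N ≠ 0) (e : ℕ) (he : N ^ e = 0) (he' : N ^ (e - 1) ≠ 0)
    (E : Submodule k V) (hE : IsCompl E (LinearMap.ker (N ^ (e - 1)))) :
    Function.Injective (fun v : Fin e → E => ∑ i : Fin e, (N ^ (i : ℕ)) (v i : V)) ∧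
    (∀ x ∈ ⨆ i : Fin e, Submodule.map (N ^ (i : ℕ)) E,
      (∀ y ∈ ⨆ i : Fin e, Submodule.map (N ^ (i : ℕ)) E,
          QuadraticMap.polar Q x y = 0) → x = 0) ∧
    IsCompl (⨆ i : Fin e, Submodule.map (N ^ (i : ℕ)) E)
      (perp Q ((⨆ i : Fin e, Submodule.map (N ^ (i : ℕ)) E : Submodule k V) : Set V)) ∧
    rad Q ≤ perp Q ((⨆ i : Fin e, Submodule.map (N ^ (i : ℕ)) E : Submodule k V) : Set V) ∧
    (∀ x ∈ perp Q ((⨆ i : Fin e, Submodule.map (N ^ (i : ℕ)) E : Submodule k V) : Set V),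
      N x ∈ perp Q ((⨆ i : Fin e, Submodule.map (N ^ (i : ℕ)) E : Submodule k V) : Set V)) ∧
    (∀ x ∈ perp Q ((⨆ i : Fin e, Submodule.map (N ^ (i : ℕ)) E : Submodule k V) : Set V),
      (N ^ (e - 1)) x = 0) :=
  stmt12_general Q hQ N hN hN0 e he E hE
end
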